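/- Let X be a set, I a nonempty finite set, (f_i)_{i∈I} a family of functions f_i : X → X having attractor A, and μ = (z_n)_{n∈ℕ} a sequence with 0 < z_{n+1} ≤ z_n for every n ∈ ℕ. Then d^μ(x,y) > 0 for every x ∈ X \ A and every y ∈ X with y ≠ x. -/
import Mathlib


open Filter Topology Set

/-- `φ : [0,∞) → [0,∞)` is a comparison function: it maps `[0,∞)` into `[0,∞)`,
is increasing, satisfies `φ t < t` for `t > 0`, and is right-continuous. -/
def IsComparisonFn (φ : ℝ → ℝ) : Prop :=
  (∀ t : ℝ, 0 ≤ t → 0 ≤ φ t) ∧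
  MonotoneOn φ (Set.Ici (0 : ℝ)) ∧
  (∀ t : ℝ, 0 < t → φ t < t) ∧
  (∀ t : ℝ, 0 ≤ t → ContinuousWithinAt φ (Set.Ici t) t)

/-- `f_{α₁…αₙ} = f_{α₁} ∘ f_{α₂} ∘ … ∘ f_{αₙ}` (the identity for the empty word). -/
def WordMap {X I : Type*} (f : I → X → X) : List I → X → X
  | [] => id
  | i :: w => f i ∘ WordMap f w

/-- `[α]_n`: the finite word consisting of the first `n` letters of the infinite word `α`. -/
def Pref {I : Type*} (α : ℕ → I) (n : ℕ) : List I := List.ofFn (fun k : Fin n => α (k : ℕ))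

/-- `X_w = f_w(X)`, the image of the whole space under the word map. -/
def WordSet {X I : Type*} (f : I → X → X) (w : List I) : Set X := Set.range (WordMap f w)

/-- A family `(f_i)_{i ∈ I}` of self-maps of `X` has attractor if:
(a) for every infinite word `α`, `⋂ₙ X_{[α]ₙ}` has a unique element `a_α`;
(b) whenever `a_α ≠ a_β`, some `X_{[α]_{n₀}}` and `X_{[β]_{n₀}}` are disjoint. -/
def HasAttractor {X I : Type*} (f : I → X → X) : Prop :=
  (∀ α : ℕ → I, ∃! a : X, ∀ n : ℕ, a ∈ WordSet f (Pref α n)) ∧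
  (∀ α β : ℕ → I, ∀ a b : X,
    (∀ n : ℕ, a ∈ WordSet f (Pref α n)) → (∀ n : ℕ, b ∈ WordSet f (Pref β n)) →
    a ≠ b →
    ∃ n₀ : ℕ, WordSet f (Pref α n₀) ∩ WordSet f (Pref β n₀) = ∅)

/-- Given a selection `a` of the points `a_β`,
`Y_w = {a_β : β ∈ Λ(I), X_w ∩ X_{[β]ₙ} ≠ ∅ for every n}`. -/
def YSet {X I : Type*} (f : I → X → X) (a : (ℕ → I) → X) (w : List I) : Set X :=
  {y | ∃ β : ℕ → I, y = a β ∧ ∀ n : ℕ, (WordSet f w ∩ WordSet f (Pref β n)).Nonempty}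

/-- `X̃_w = X_w ∪ Y_w`. -/
def XtSet {X I : Type*} (f : I → X → X) (a : (ℕ → I) → X) (w : List I) : Set X :=
  WordSet f w ∪ YSet f a w

open Classical in
/-- The semi-metric `d^μ` associated to the family and the sequence `μ`:
`d^μ(x,x) = 0` and for `x ≠ y`,
`d^μ(x,y) = inf { Σ_{i=0}^n z_{|α_i|} : x ∈ X̃_{α₀}, y ∈ X̃_{α_n},`
`X̃_{α_i} ∩ X̃_{α_{i+1}} ≠ ∅ for all 0 ≤ i ≤ n-1 }`. -/
noncomputable def dmu {X I : Type*} (f : I → X → X) (a : (ℕ → I) → X) (μ : ℕ → ℝ)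
    (x y : X) : ℝ :=
  if x = y then 0
  else sInf {s : ℝ | ∃ (n : ℕ) (c : ℕ → List I),
    x ∈ XtSet f a (c 0) ∧ y ∈ XtSet f a (c n) ∧
    (∀ i < n, (XtSet f a (c i) ∩ XtSet f a (c (i + 1))).Nonempty) ∧
    s = ∑ i ∈ Finset.range (n + 1), μ (c i).length}


theorem wordMap_append' {X I : Type*} (f : I → X → X) (u v : List I) :
    WordMap f (u ++ v) = WordMap f u ∘ WordMap f v := by
  induction u with
  | nil => rfl
  | cons i u ih => simp [WordMap, ih, Function.comp_assoc]

theorem wordSet_anti' {X I : Type*} (f : I → X → X) {u w : List I} (h : u <+: w) :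
    WordSet f w ⊆ WordSet f u := by
  obtain ⟨t, rfl⟩ := h
  rintro x ⟨z, rfl⟩
  exact ⟨WordMap f t z, by rw [wordMap_append']; rfl⟩

theorem pref_succ' {I : Type*} (α : ℕ → I) (n : ℕ) :
    Pref α (n + 1) = Pref α n ++ [α n] := by
  show List.ofFn _ = _
  rw [List.ofFn_succ']
  simp [Pref, List.concat_eq_append]

/-- Auxiliary: iterate a choice function to build a branch. -/
def branchAux' {I : Type*} (pick : List I → I) : ℕ → List I
  | 0 => []
  | n + 1 => branchAux' pick n ++ [pick (branchAux' pick n)]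

/-- If `x` lies in `X_w` for arbitrarily long words `w`, then `x ∈ Set.range a`
(König's lemma argument). -/
theorem mem_range_of_unbounded' {X I : Type*} [Finite I] [Nonempty I]
    (f : I → X → X) (hF : HasAttractor f)
    (a : (ℕ → I) → X) (ha : ∀ (α : ℕ → I) (n : ℕ), a α ∈ WordSet f (Pref α n))
    (x : X) (hx : ∀ N : ℕ, ∃ w : List I, x ∈ WordSet f w ∧ N ≤ w.length) :
    x ∈ Set.range a := by
  classical
  letI := Fintype.ofFinite I
  -- P w : arbitrarily long prefix-extensions of w contain x
  set P : List I → Prop := fun w =>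
    ∀ n : ℕ, ∃ w' : List I, w <+: w' ∧ n ≤ w'.length ∧ x ∈ WordSet f w' with hP
  have hstep : ∀ w, P w → ∃ i : I, P (w ++ [i]) := by
    intro w hw
    by_contra hcon
    push_neg at hcon
    simp only [hP] at hcon
    push_neg at hcon
    choose n hn using hcon
    set N := max (w.length + 1) (Finset.univ.sup n) with hN
    obtain ⟨w', hpre, hlen, hxw'⟩ := hw N
    obtain ⟨t, rfl⟩ := hpre
    have ht : t ≠ [] := by
      rintro rfl
      simp only [List.append_nil] at hlen
      omega
    obtain ⟨i, t, rfl⟩ := List.exists_cons_of_ne_nil ht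
    refine hn i (w ++ i :: t) ⟨t, by simp⟩ ?_ hxw'
    exact le_trans (le_trans (Finset.le_sup (Finset.mem_univ i)) (le_max_right _ _)) hlen
  set pick : List I → I := fun w =>
    if h : ∃ i : I, P (w ++ [i]) then h.choose else Classical.arbitrary I with hpick
  set g : ℕ → List I := branchAux' pick with hg
  have hPg : ∀ n, P (g n) := by
    intro n
    induction n with
    | zero =>
      intro m
      obtain ⟨w, hxw, hlw⟩ := hx m
      exact ⟨w, List.nil_prefix, hlw, hxw⟩
    | succ n ih =>
      have hex : ∃ i : I, P (g n ++ [i]) := hstep _ ih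
      have : pick (g n) = hex.choose := by simp [hpick, dif_pos hex]
      show P (g n ++ [pick (g n)])
      rw [this]
      exact hex.choose_spec
  set α : ℕ → I := fun n => pick (g n) with hα
  have hpref : ∀ n, Pref α n = g n := by
    intro n
    induction n with
    | zero => rfl
    | succ n ih => rw [pref_succ', ih]; rfl
  have hxall : ∀ n, x ∈ WordSet f (Pref α n) := by
    intro n
    rw [hpref]
    obtain ⟨w', hpre, _, hxw'⟩ := hPg n n
    exact wordSet_anti' f hpre hxw'
  obtain ⟨b, _, hb⟩ := hF.1 α
  exact ⟨α, ((hb x hxall).trans (hb (a α) (ha α)).symm).symm⟩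

/-- **Proposition 3.8 d).** `d^μ(x,y) > 0` for every `x ∈ X ∖ A` and every `y ≠ x`. -/
theorem dmu_pos_of_not_mem_attractor {X I : Type*} [Finite I] [Nonempty I]
    (f : I → X → X) (hF : HasAttractor f)
    (a : (ℕ → I) → X) (ha : ∀ (α : ℕ → I) (n : ℕ), a α ∈ WordSet f (Pref α n))
    (μ : ℕ → ℝ) (hpos : ∀ n : ℕ, 0 < μ n) (hdec : ∀ n : ℕ, μ (n + 1) ≤ μ n) :
    ∀ x : X, x ∉ Set.range a → ∀ y : X, y ≠ x → 0 < dmu f a μ x y := by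
  intro x hx y hyx
  classical
  -- `x` can only lie in `X_w` for words of bounded length
  have hbound : ∃ N : ℕ, ∀ w : List I, x ∈ WordSet f w → w.length < N := by
    by_contra hcon
    push_neg at hcon
    exact hx (mem_range_of_unbounded' f hF a ha x
      (fun N => by obtain ⟨w, h1, h2⟩ := hcon N; exact ⟨w, h1, h2⟩))
  obtain ⟨N, hN⟩ := hbound
  have hxy : x ≠ y := fun h => hyx h.symm
  rw [dmu, if_neg hxy]
  have hanti : Antitone μ := antitone_nat_of_succ_le hdec
  refine lt_of_lt_of_le (hpos N) (le_csInf ?_ ?_)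
  · refine ⟨μ ([] : List I).length, 0, fun _ => [], ?_, ?_, ?_, by simp⟩
    · exact Or.inl ⟨x, rfl⟩
    · exact Or.inl ⟨y, rfl⟩
    · intro i hi; exact absurd hi (Nat.not_lt_zero i)
  · rintro s ⟨n, c, hx0, hyn, hchain, rfl⟩
    have hxc0 : x ∈ WordSet f (c 0) := by
      rcases hx0 with h | ⟨β, rfl, _⟩
      · exact h
      · exact absurd ⟨β, rfl⟩ hx
    have h1 : μ N ≤ μ (c 0).length := hanti (le_of_lt (hN _ hxc0))
    refine le_trans h1 ?_
    refine Finset.single_le_sum (f := fun i => μ (c i).length) ?_ ?_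
    · intro i _; exact le_of_lt (hpos _)
    · simp
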